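/- Let X be a chain and let α, β be orientation-preserving full transformations of X. Then α and β are L-related in the monoid OP(X) (i.e. there exist γ, λ ∈ OP(X) with α = γβ and β = λα, where γβ means γ applied first) if and only if Im(α) = Im(β). -/
import Mathlib


variable {X : Type*}

/-- The full transformation `f` is order-preserving on the subset `A`. -/
def OrdOn [LinearOrder X] (f : X → X) (A : Set X) : Prop :=
  ∀ ⦃x y : X⦄, x ∈ A → y ∈ A → x ≤ y → f x ≤ f y

/-- `Y` is an ideal of the full transformation `f`. -/
def IsIdealFull [LinearOrder X] (f : X → X) (Y : Set X) : Prop :=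
  Y.Nonempty ∧ OrdOn f Y ∧ OrdOn f Yᶜ ∧
    ∀ ⦃a b : X⦄, a ∈ Y → b ∈ Yᶜ → a ≤ b ∧ f b ≤ f a

/-- `f` is an orientation-preserving full transformation. -/
def IsOPFull [LinearOrder X] (f : X → X) : Prop := ∃ Y : Set X, IsIdealFull f Y

/-- Key construction: if `range α ⊆ range β`, there is an orientation-preserving `γ`
with `β ∘ γ = α`. -/
theorem key_factor {X : Type*} [LinearOrder X] {α β : X → X}
    (hα : IsOPFull α) (hβ : IsOPFull β) (hsub : Set.range α ⊆ Set.range β) :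
    ∃ γ : X → X, IsOPFull γ ∧ β ∘ γ = α := by
  classical
  obtain ⟨Ya, hYane, hYao, hYaco, hYa2⟩ := hα
  obtain ⟨Yb, hYbne, hYbo, hYbco, hYb2⟩ := hβ
  set s : X → X := fun t =>
    if h : ∃ a ∈ Yb, β a = t then h.choose
    else if h' : ∃ a, β a = t then h'.choose else hYbne.choose with hs
  set γ : X → X := fun x => s (α x) with hγdef
  set Q : X → Prop := fun x => ∃ a ∈ Yb, β a = α x with hQ
  have hrange : ∀ x, ∃ a, β a = α x := fun x => hsub ⟨x, rfl⟩
  have hγin : ∀ x, Q x → γ x ∈ Yb ∧ β (γ x) = α x := by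
    intro x hx
    simp only [hγdef, hs]
    rw [dif_pos hx]
    exact ⟨hx.choose_spec.1, hx.choose_spec.2⟩
  have hγout : ∀ x, ¬ Q x → γ x ∈ Ybᶜ ∧ β (γ x) = α x := by
    intro x hx
    simp only [hγdef, hs]
    rw [dif_neg hx, dif_pos (hrange x)]
    exact ⟨fun hmem => hx ⟨_, hmem, (hrange x).choose_spec⟩, (hrange x).choose_spec⟩
  have hβγ : β ∘ γ = α := by
    funext x
    by_cases hx : Q x
    · exact (hγin x hx).2
    · exact (hγout x hx).2
  have hQeq : ∀ x y, α x = α y → γ x = γ y := by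
    intro x y hxy; simp only [hγdef, hxy]
  have hQcongr : ∀ x y, α x = α y → Q x → Q y := by
    intro x y hxy hx
    simp only [hQ] at hx ⊢
    rwa [← hxy]
  have mono1 : ∀ x y, Q x → Q y → α x ≤ α y → γ x ≤ γ y := by
    intro x y hx hy hxy
    rcases eq_or_lt_of_le hxy with heq | hlt
    · exact (hQeq x y heq).le
    · by_contra hc
      push_neg at hc
      have := hYbo (hγin y hy).1 (hγin x hx).1 hc.le
      rw [(hγin y hy).2, (hγin x hx).2] at this
      exact absurd this (not_le_of_gt hlt)
  have mono2 : ∀ x y, ¬ Q x → ¬ Q y → α x ≤ α y → γ x ≤ γ y := by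
    intro x y hx hy hxy
    rcases eq_or_lt_of_le hxy with heq | hlt
    · exact (hQeq x y heq).le
    · by_contra hc
      push_neg at hc
      have := hYbco (hγout y hy).1 (hγout x hx).1 hc.le
      rw [(hγout y hy).2, (hγout x hx).2] at this
      exact absurd this (not_le_of_gt hlt)
  have cross : ∀ x y, ¬ Q x → Q y → γ y ≤ γ x ∧ α x ≤ α y := by
    intro x y hx hy
    have := hYb2 (hγin y hy).1 (hγout x hx).1
    rw [(hγin y hy).2, (hγout x hx).2] at this
    exact this
  -- value-level: ¬Q x, Q y → α x ≠ α y
  have hne : ∀ x y, ¬ Q x → Q y → α x ≠ α y := by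
    intro x y hx hy heq
    exact hx (hQcongr y x heq.symm hy)
  refine ⟨γ, ?_, hβγ⟩
  by_cases h2 : ∃ x, x ∈ Ya ∧ ¬ Q x
  · -- case A : Z = Ya ∩ ¬Q
    obtain ⟨x0, hx0a, hx0q⟩ := h2
    -- P3 is empty
    have hP3 : ∀ y, y ∈ Yaᶜ → ¬ Q y := by
      intro y hy hQy
      have h1 : α y ≤ α x0 := (hYa2 hx0a hy).2
      have h2 : α x0 ≤ α y := (cross x0 y hx0q hQy).2
      exact hne x0 y hx0q hQy (le_antisymm h2 h1)
    refine ⟨{x | x ∈ Ya ∧ ¬ Q x}, ⟨x0, hx0a, hx0q⟩, ?_, ?_, ?_⟩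
    · -- OrdOn γ Z
      intro x y hx hy hxy
      exact mono2 x y hx.2 hy.2 (hYao hx.1 hy.1 hxy)
    · -- OrdOn γ Zᶜ
      intro x y hx hy hxy
      simp only [Set.mem_compl_iff, Set.mem_setOf_eq, not_and, not_not] at hx hy
      by_cases hxa : x ∈ Ya
      · have hQx := hx hxa
        by_cases hya : y ∈ Ya
        · exact mono1 x y hQx (hy hya) (hYao hxa hya hxy)
        · -- y ∈ Yaᶜ so ¬ Q y
          exact (cross y x (hP3 y hya) hQx).1
      · -- x ∈ Yaᶜ
        have hQx := hP3 x hxa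
        by_cases hya : y ∈ Ya
        · -- y ∈ Ya, x ∈ Yaᶜ with x ≤ y : forces x = y
          have := (hYa2 hya hxa).1
          have hxy' : x = y := le_antisymm hxy this
          exact absurd (congrArg α hxy') (hne x y hQx (hy hya))
        · exact mono2 x y hQx (hP3 y hya) (hYaco hxa hya hxy)
    · -- OP2
      intro a b ha hb
      simp only [Set.mem_setOf_eq] at ha
      simp only [Set.mem_compl_iff, Set.mem_setOf_eq, not_and, not_not] at hb
      by_cases hba : b ∈ Ya
      · have hQb := hb hba
        constructor
        · by_contra hc
          push_neg at hc
          have : α b ≤ α a := hYao hba ha.1 hc.le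
          have h2 : α a ≤ α b := (cross a b ha.2 hQb).2
          exact hne a b ha.2 hQb (le_antisymm h2 this)
        · exact (cross a b ha.2 hQb).1
      · have hQb := hP3 b hba
        exact ⟨(hYa2 ha.1 hba).1, mono2 b a hQb ha.2 (hYa2 ha.1 hba).2⟩
  · -- case B : P2 empty, Z = {x | x ∈ Ya ∨ ¬ Q x}
    push_neg at h2
    -- h2 : ∀ x, x ∈ Ya → Q x
    refine ⟨{x | x ∈ Ya ∨ ¬ Q x}, ⟨hYane.choose, Or.inl hYane.choose_spec⟩, ?_, ?_, ?_⟩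
    · -- OrdOn γ Z
      intro x y hx hy hxy
      simp only [Set.mem_setOf_eq] at hx hy
      by_cases hQx : Q x
      · by_cases hQy : Q y
        · -- both Q: x, y ∈ Ya (else ¬Q by membership in Z)
          have hxa : x ∈ Ya := hx.resolve_right (fun h => h hQx)
          have hya : y ∈ Ya := hy.resolve_right (fun h => h hQy)
          exact mono1 x y hQx hQy (hYao hxa hya hxy)
        · exact (cross y x hQy hQx).1
      · by_cases hQy : Q y
        · -- x ¬Q so x ∈ Yaᶜ (h2), y ∈ Ya; x ≤ y forces x = y
          have hxa : x ∉ Ya := fun h => hQx (h2 x h)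
          have hya : y ∈ Ya := hy.resolve_right (fun h => h hQy)
          have := (hYa2 hya hxa).1
          exact absurd (hne x y hQx hQy) (fun h => h (congrArg α (le_antisymm hxy this)))
        · have hxa : x ∉ Ya := fun h => hQx (h2 x h)
          have hya : y ∉ Ya := fun h => hQy (h2 y h)
          exact mono2 x y hQx hQy (hYaco hxa hya hxy)
    · -- OrdOn γ Zᶜ = {x | x ∉ Ya ∧ Q x}
      intro x y hx hy hxy
      simp only [Set.mem_compl_iff, Set.mem_setOf_eq, not_or, not_not] at hx hy
      exact mono1 x y hx.2 hy.2 (hYaco hx.1 hy.1 hxy)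
    · -- OP2
      intro a b ha hb
      simp only [Set.mem_setOf_eq] at ha
      simp only [Set.mem_compl_iff, Set.mem_setOf_eq, not_or, not_not] at hb
      by_cases hQa : Q a
      · have haa : a ∈ Ya := ha.resolve_right (fun h => h hQa)
        exact ⟨(hYa2 haa hb.1).1, mono1 b a hb.2 hQa (hYa2 haa hb.1).2⟩
      · have haa : a ∉ Ya := fun h => hQa (h2 a h)
        constructor
        · by_contra hc
          push_neg at hc
          have : α b ≤ α a := hYaco hb.1 haa hc.le
          have h3 : α a ≤ α b := (cross a b hQa hb.2).2
          exact hne a b hQa hb.2 (le_antisymm h3 this)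
        · exact (cross a b hQa hb.2).1

/-- Green's relation `L` in `OP(X)`: `α L β` (i.e. `α = γβ` and `β = λα` for some
`γ, λ ∈ OP(X)`, left factor applied first) iff `Im α = Im β`. -/
theorem stmt11 (X : Type*) [LinearOrder X] (α β : X → X)
    (hα : IsOPFull α) (hβ : IsOPFull β) :
    ((∃ γ : X → X, IsOPFull γ ∧ β ∘ γ = α) ∧ (∃ l : X → X, IsOPFull l ∧ α ∘ l = β)) ↔
      Set.range α = Set.range β := by
  constructor
  · rintro ⟨⟨γ, _, hγe⟩, ⟨l, _, hle⟩⟩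
    apply Set.Subset.antisymm
    · rintro _ ⟨x, rfl⟩
      exact ⟨γ x, congrFun hγe x⟩
    · rintro _ ⟨x, rfl⟩
      exact ⟨l x, congrFun hle x⟩
  · intro h
    exact ⟨key_factor hα hβ h.le, key_factor hβ hα h.ge⟩
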